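/- Let φ: R → S be a flat local homomorphism of Noetherian local rings satisfying condition (†), and let 0 → M' → M → M'' → 0 be an exact sequence of finitely generated R-modules. Then M has a compatible S-module structure if and only if both M' and M'' have compatible S-module structures. -/

import Mathlib

/-- An R-module `M` "has an S-module structure compatible with its R-module
structure" if there is an S-scalar multiplication on `M` satisfying the module
axioms and with `r • x = φ(r) ∘ x` for all `r : R`, `x : M`. -/
def HasCompatibleSModule (R S M : Type*) [CommRing R] [CommRing S] [Algebra R S]
    [AddCommGroup M] [Module R M] : Prop :=
  ∃ smul : S → M → M,
    (∀ x, smul 1 x = x) ∧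
    (∀ s t x, smul (s * t) x = smul s (smul t x)) ∧
    (∀ s x y, smul s (x + y) = smul s x + smul s y) ∧
    (∀ s t x, smul (s + t) x = smul s x + smul t x) ∧
    (∀ r : R, ∀ x, smul (algebraMap R S r) x = r • x)


/-! A compatible `S`-structure on `X` is the same as bijectivity of `η : X → S ⊗[R] X`, since an
`S`-module structure yields the retraction `μ : S ⊗[R] X → X`, `s ⊗ x ↦ s • x`, and `η` is always
injective by faithful flatness. For surjectivity, `S = R + 𝔪S` gives `S ⊗ X = η X + 𝔪 (S ⊗ X)`,
so the projection `id - η ∘ μ` onto `ker μ` shows `ker μ = 𝔪 • ker μ`; this is a finitely generated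
`S`-submodule, hence zero by Nakayama. For a short exact sequence the maps `η` form a morphism of
short exact sequences (flatness), and the four and five lemmas transfer bijectivity. -/

open TensorProduct IsLocalRing

namespace HasCompatibleSModule

variable {R S M : Type*} [CommRing R] [CommRing S] [Algebra R S] [AddCommGroup M] [Module R M]

theorem of_isScalarTower [Module S M] [IsScalarTower R S M] : HasCompatibleSModule R S M :=
  ⟨(· • ·), one_smul S, mul_smul, smul_add, add_smul, algebraMap_smul S⟩

theorem exists_isScalarTower (h : HasCompatibleSModule R S M) :
    ∃ _ : Module S M, IsScalarTower R S M := by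
  obtain ⟨σ, one_σ, mul_σ, σ_add, add_σ, algebraMap_σ⟩ := h
  let _ : SMul S M := ⟨σ⟩
  let inst : Module S M := Module.ofMinimalAxioms σ_add add_σ mul_σ one_σ
  refine ⟨inst, ⟨fun r s x => ?_⟩⟩
  change σ (r • s) x = r • σ s x
  rw [Algebra.smul_def, mul_σ, algebraMap_σ]

theorem of_linearEquiv {N : Type*} [AddCommGroup N] [Module R N] [Module S N]
    [IsScalarTower R S N] (e : M ≃ₗ[R] N) : HasCompatibleSModule R S M :=
  ⟨fun s x => e.symm (s • e x), by simp, by simp [mul_smul], by simp, by simp [add_smul],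
    by simp⟩

theorem of_bijective_mk_one (h : Function.Bijective (TensorProduct.mk R S M 1)) :
    HasCompatibleSModule R S M :=
  of_linearEquiv (LinearEquiv.ofBijective _ h)

end HasCompatibleSModule

namespace TensorProduct

variable {R S M : Type*} [CommRing R] [CommRing S] [Algebra R S] [AddCommGroup M] [Module R M]

theorem range_mk_one_sup_smul_top_eq_top (I : Ideal R)
    (h : ∀ s : S, ∃ r : R, s - algebraMap R S r ∈ I.map (algebraMap R S)) :
    LinearMap.range (mk R S M 1) ⊔ I • ⊤ = ⊤ := by
  refine eq_top_iff.mpr ((span_tmul_eq_top R S M).ge.trans (Submodule.span_le.mpr ?_))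
  rintro _ ⟨s, x, rfl⟩
  obtain ⟨r, hr⟩ := h s
  have hsub : (s - algebraMap R S r) ⊗ₜ[R] x ∈ I • (⊤ : Submodule R (S ⊗[R] M)) := by
    rw [← Submodule.restrictScalars_mem R, ← Ideal.smul_top_eq_map] at hr
    have := Submodule.mem_map_of_mem (f := (mk R S M).flip x) hr
    rw [Submodule.map_smul''] at this
    exact Submodule.smul_mono le_rfl le_top this
  have hdecomp : s ⊗ₜ[R] x = mk R S M 1 (r • x) + (s - algebraMap R S r) ⊗ₜ[R] x := by
    rw [mk_apply, ← smul_tmul, ← Algebra.algebraMap_eq_smul_one, sub_tmul, add_sub_cancel]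
  rw [SetLike.mem_coe, hdecomp]
  exact Submodule.add_mem_sup (LinearMap.mem_range_self _ _) hsub

theorem surjective_mk_one_of_isScalarTower [IsNoetherianRing S] [Module.Finite R M]
    [Module S M] [IsScalarTower R S M] (I : Ideal R)
    (hI : I.map (algebraMap R S) ≤ Ideal.jacobson ⊥)
    (h : ∀ s : S, ∃ r : R, s - algebraMap R S r ∈ I.map (algebraMap R S)) :
    Function.Surjective (mk R S M 1) := by
  set μ : S ⊗[R] M →ₗ[S] M := LinearMap.liftBaseChange S LinearMap.id
  have μ_mk : ∀ x, μ (1 ⊗ₜ x) = x := fun x => by simp [μ]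
  set ρ : S ⊗[R] M →ₗ[R] S ⊗[R] M := LinearMap.id - mk R S M 1 ∘ₗ μ.restrictScalars R
  have ρ_mk : ρ ∘ₗ mk R S M 1 = 0 := by ext x; simp [ρ, μ_mk]
  have range_ρ : LinearMap.range ρ ≤ (LinearMap.ker μ).restrictScalars R := by
    rintro _ ⟨t, rfl⟩
    simp [ρ, μ_mk]
  have ker_le : LinearMap.ker μ ≤ I.map (algebraMap R S) • LinearMap.ker μ := by
    intro k hk
    rw [← Submodule.restrictScalars_mem R, Ideal.smul_restrictScalars]
    have hρk : ρ k = k := by simp [ρ, LinearMap.mem_ker.mp hk]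
    have hk' : k ∈ (LinearMap.range (mk R S M 1) ⊔ I • ⊤).map ρ := by
      rw [range_mk_one_sup_smul_top_eq_top I h]
      exact hρk ▸ Submodule.mem_map_of_mem trivial
    rw [Submodule.map_sup, Submodule.map_smul'', ← LinearMap.range_comp, ρ_mk,
      LinearMap.range_zero, bot_sup_eq, Submodule.map_top] at hk'
    exact Submodule.smul_mono le_rfl range_ρ hk'
  have ker_eq_bot : LinearMap.ker μ = ⊥ :=
    Submodule.eq_bot_of_le_smul_of_le_jacobson_bot _ _ (IsNoetherian.noetherian _) ker_le hI
  intro t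
  exact ⟨μ t, LinearMap.ker_eq_bot.mp ker_eq_bot (by simp [μ_mk])⟩

theorem bijective_mk_one_iff_of_shortExact [Module.FaithfullyFlat R S]
    {M' M'' : Type*} [AddCommGroup M'] [AddCommGroup M''] [Module R M'] [Module R M'']
    {f : M' →ₗ[R] M} {g : M →ₗ[R] M''} (hf : Function.Injective f) (hg : Function.Surjective g)
    (hfg : Function.Exact f g) :
    Function.Bijective (mk R S M 1) ↔
      Function.Bijective (mk R S M' 1) ∧ Function.Bijective (mk R S M'' 1) := by
  have hcf : f.lTensor S ∘ₗ mk R S M' 1 = mk R S M 1 ∘ₗ f := rfl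
  have hcg : g.lTensor S ∘ₗ mk R S M 1 = mk R S M'' 1 ∘ₗ g := rfl
  have hfg' : Function.Exact (f.lTensor S) (g.lTensor S) := lTensor_exact S hfg hg
  have hf' : Function.Injective (f.lTensor S) :=
    Module.Flat.lTensor_preserves_injective_linearMap f hf
  have hg' : Function.Surjective (g.lTensor S) := LinearMap.lTensor_surjective S hg
  constructor
  · intro hM
    have hM' := LinearMap.bijective_of_bijective_of_injective_of_left_exact _ _ _ _ _ _ _
      hcf hcg hfg hfg' hM (Module.FaithfullyFlat.tensorProduct_mk_injective M'') hf hf'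
    exact ⟨hM', LinearMap.bijective_of_surjective_of_bijective_of_right_exact _ _ _ _ _ _ _
      hcf hcg hfg hfg' hM'.2 hM hg hg'⟩
  · rintro ⟨hM', hM''⟩
    have hg0 : Function.Exact g (0 : M'' →ₗ[R] Unit) :=
      (LinearMap.exact_zero_iff_surjective _ _).mpr hg
    have hg0' : Function.Exact (g.lTensor S) (0 : S ⊗[R] M'' →ₗ[R] Unit) :=
      (LinearMap.exact_zero_iff_surjective _ _).mpr hg'
    exact ⟨Module.FaithfullyFlat.tensorProduct_mk_injective M,
      LinearMap.surjective_of_surjective_of_surjective_of_injective _ _ _ _ _ _ _ _ _ 0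
        hcf hcg (by simp) hg0 hfg' hg0' hM'.2 hM''.2 (Function.injective_of_subsingleton _)⟩

end TensorProduct

theorem hasCompatibleSModule_iff_bijective_mk_one {R S M : Type*} [CommRing R] [CommRing S]
    [Algebra R S] [IsNoetherianRing S] [AddCommGroup M] [Module R M] [Module.Finite R M]
    (I : Ideal R) (hI : I.map (algebraMap R S) ≤ Ideal.jacobson ⊥)
    (h : ∀ s : S, ∃ r : R, s - algebraMap R S r ∈ I.map (algebraMap R S)) :
    HasCompatibleSModule R S M ↔ Function.Bijective (TensorProduct.mk R S M 1) := by
  refine ⟨fun hM => ?_, HasCompatibleSModule.of_bijective_mk_one⟩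
  obtain ⟨_, _⟩ := hM.exists_isScalarTower
  exact ⟨Algebra.TensorProduct.mk_one_injective_of_isScalarTower M,
    surjective_mk_one_of_isScalarTower I hI h⟩

theorem stmt_12_general (R S : Type*) [CommRing R] [CommRing S]
    [IsNoetherianRing S] [IsLocalRing R] [IsLocalRing S]
    [Algebra R S] [Module.Flat R S] [IsLocalHom (algebraMap R S)]
    (h1 : (IsLocalRing.maximalIdeal R).map (algebraMap R S) = IsLocalRing.maximalIdeal S)
    (h2 : ∀ s : S, ∃ r : R, s - algebraMap R S r ∈ IsLocalRing.maximalIdeal S)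
    (M' M M'' : Type*) [AddCommGroup M'] [AddCommGroup M] [AddCommGroup M'']
    [Module R M'] [Module R M] [Module R M'']
    [Module.Finite R M'] [Module.Finite R M] [Module.Finite R M'']
    (f : M' →ₗ[R] M) (g : M →ₗ[R] M'')
    (hf : Function.Injective f) (hg : Function.Surjective g)
    (hexact : Function.Exact f g) :
    HasCompatibleSModule R S M ↔
      (HasCompatibleSModule R S M' ∧ HasCompatibleSModule R S M'') := by
  have : Module.FaithfullyFlat R S := .of_flat_of_isLocalHom
  have hI : (maximalIdeal R).map (algebraMap R S) ≤ Ideal.jacobson ⊥ :=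
    h1 ▸ maximalIdeal_le_jacobson ⊥
  have h : ∀ s : S, ∃ r : R, s - algebraMap R S r ∈ (maximalIdeal R).map (algebraMap R S) :=
    h1 ▸ h2
  simp only [hasCompatibleSModule_iff_bijective_mk_one _ hI h]
  exact bijective_mk_one_iff_of_shortExact hf hg hexact

theorem stmt_12 (R S : Type*) [CommRing R] [CommRing S]
    [IsNoetherianRing R] [IsNoetherianRing S] [IsLocalRing R] [IsLocalRing S]
    [Algebra R S] [Module.Flat R S] [IsLocalHom (algebraMap R S)]
    (h1 : (IsLocalRing.maximalIdeal R).map (algebraMap R S) = IsLocalRing.maximalIdeal S)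
    (h2 : ∀ s : S, ∃ r : R, s - algebraMap R S r ∈ IsLocalRing.maximalIdeal S)
    (M' M M'' : Type*) [AddCommGroup M'] [AddCommGroup M] [AddCommGroup M'']
    [Module R M'] [Module R M] [Module R M'']
    [Module.Finite R M'] [Module.Finite R M] [Module.Finite R M'']
    (f : M' →ₗ[R] M) (g : M →ₗ[R] M'')
    (hf : Function.Injective f) (hg : Function.Surjective g)
    (hexact : Function.Exact f g) :
    HasCompatibleSModule R S M ↔
      (HasCompatibleSModule R S M' ∧ HasCompatibleSModule R S M'') :=
  stmt_12_general R S h1 h2 M' M M'' f g hf hg hexact
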